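/- arXiv:2212.05674 — 5 statements merged into one kernel-verified Lean document; each statement's English description precedes it below -/
import Mathlib

section
/- Let 0 < r₂ < r₁ and let W₁ and W₂ be the solutions of the F̃-ODE with initial slopes r₁ and r₂ respectively. For i = 1, 2 let c_i = inf{ x > 0 : W_i(x) = 0 } (with the infimum of the empty set taken to be +∞), and define Y_i(x) = ∫₀ˣ W_i(s) ds + (1/α)·((σ²/2)·r_i − F̃(−p)). Then for every x ∈ [0, c₁ ∧ c₂): W₂'(x) < W₁'(x); W₂(x) ≤ W₁(x), with equality only at x = 0; and Y₂(x) < Y₁(x). -/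
/-!
Since `θxW' + θW = (θxW)'`, the ODE integrates once to the conservation law
`(σ²/2)W' − F̃(W) − θxW − α∫₀ˣW = (σ²/2)r − F̃(−p)`. Subtracting the laws for `W₁` and `W₂` at
the first point `x₀` where `W₁' − W₂'` would vanish, `W₁ − W₂ ≥ 0` on `[0, x₀]`, so every term of
`(σ²/2)(W₁' − W₂')(x₀) = (σ²/2)(r₁ − r₂) + F̃(W₁) − F̃(W₂) + θx₀(W₁ − W₂) + α∫₀^{x₀}(W₁ − W₂)`
is nonnegative as soon as `F̃` is nondecreasing, and the first one is positive: a contradiction.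

`F̃` is differentiable and nondecreasing because on `(−∞, 0)` the maximiser `u(y) ≥ 0` of
`u·y − C(u)` (`h(y)` above `C'(0)`, `0` below) is a subgradient of `F`; it is monotone, and it has
no jumps since `C'` increases strictly onto `[C'(0), 0)`, so the subgradient inequalities squeeze
`F'(y) = u(y)`.
-/

open Set Filter

/-- The Legendre–Fenchel transform `F(y) = sup_{u ≥ 0} (u·y − C(u))`. -/
noncomputable def LF (C : ℝ → ℝ) (y : ℝ) : ℝ :=
  sSup ((fun u => u * y - C u) '' Set.Ici (0 : ℝ))

/-- The linear extension `F̃` of the Legendre transform: `F̃(y) = F(y)` for `y ≤ -δ`, and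
`F̃(y) = h(-δ)·(y+δ) + F(-δ)` for `y > -δ`, where `h = (C')⁻¹` (so `h(-δ) = F'(-δ)`). -/
noncomputable def Ftilde (C h : ℝ → ℝ) (δ : ℝ) (y : ℝ) : ℝ :=
  if y ≤ -δ then LF C y else h (-δ) * (y + δ) + LF C (-δ)

/-- `W` solves the `F̃`-ODE
`(σ²/2)W'' − F̃'(W)W' − θxW' − (θ+α)W = 0` on `[0,∞)` with `W(0) = -p`, `W'(0) = r`. -/
def SolvesFtildeODE (C h : ℝ → ℝ) (δ σ θ α p r : ℝ) (W : ℝ → ℝ) : Prop :=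
  ContDiff ℝ 2 W ∧ W 0 = -p ∧ deriv W 0 = r ∧
  ∀ x ≥ (0 : ℝ),
    σ ^ 2 / 2 * deriv (deriv W) x - deriv (Ftilde C h δ) (W x) * deriv W x
      - θ * x * deriv W x - (θ + α) * W x = 0

open Topology

theorem ConvexOn.add_deriv_mul_sub_le {S : Set ℝ} {f : ℝ → ℝ} {x y : ℝ} (hf : ConvexOn ℝ S f)
    (hx : x ∈ S) (hy : y ∈ S) (hd : DifferentiableAt ℝ f x) :
    f x + deriv f x * (y - x) ≤ f y := by
  rcases lt_trichotomy x y with hxy | rfl | hyx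
  · have := hf.deriv_le_slope hx hy hxy hd
    rw [slope_def_field, le_div_iff₀ (sub_pos.2 hxy)] at this
    linarith
  · simp
  · have := hf.slope_le_deriv hy hx hyx hd
    rw [slope_def_field, div_le_iff₀ (sub_pos.2 hyx)] at this
    linarith

theorem hasDerivAt_of_subgradient_of_continuousAt {f g : ℝ → ℝ} {y : ℝ}
    (hsub : ∀ᶠ z in 𝓝 y, g y * (z - y) ≤ f z - f y ∧ g z * (y - z) ≤ f y - f z)
    (hg : ContinuousAt g y) : HasDerivAt f (g y) y := by
  rw [hasDerivAt_iff_isLittleO]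
  have hg0 : Tendsto (fun z => g z - g y) (𝓝 y) (𝓝 0) := by
    simpa using hg.tendsto.sub_const (g y)
  have hsmall : (fun z => (g z - g y) * (z - y)) =o[𝓝 y] fun z => z - y := by
    simpa using ((Asymptotics.isLittleO_one_iff ℝ).2 hg0).mul_isBigO
      (Asymptotics.isBigO_refl (fun z => z - y) (𝓝 y))
  refine (Asymptotics.IsBigO.of_bound' ?_).trans_isLittleO hsmall
  filter_upwards [hsub] with z ⟨hleft, hright⟩
  rw [Real.norm_eq_abs, Real.norm_eq_abs, smul_eq_mul, abs_of_nonneg (by linarith),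
    abs_of_nonneg (by linarith)]
  linarith

theorem Continuous.pos_of_forall_Ico_pos_imp_pos {f : ℝ → ℝ} (hf : Continuous f)
    (hstep : ∀ x ≥ (0 : ℝ), (∀ y ∈ Ico 0 x, 0 < f y) → 0 < f x) {x : ℝ} (hx : 0 ≤ x) :
    0 < f x := by
  by_contra! hfx
  let S : Set ℝ := {t | 0 ≤ t} ∩ {t | f t ≤ 0}
  have hS : IsClosed S := (isClosed_le continuous_const continuous_id).inter
    (isClosed_le hf continuous_const)
  have hbdd : BddBelow S := ⟨0, fun t ht => ht.1⟩
  obtain ⟨hinf0, hfinf⟩ : sInf S ∈ S := hS.csInf_mem ⟨x, hx, hfx⟩ hbdd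
  have := hstep _ hinf0 fun y hy =>
    lt_of_not_ge fun hfy => (csInf_le hbdd ⟨hy.1, hfy⟩).not_gt hy.2
  exact this.not_ge hfinf

theorem strictMonoOn_sub_of_deriv_lt {f g : ℝ → ℝ} {a b : ℝ} (hf : Differentiable ℝ f)
    (hg : Differentiable ℝ g) (hlt : ∀ y ∈ Ico a b, deriv g y < deriv f y) :
    StrictMonoOn (fun s => f s - g s) (Icc a b) := by
  refine strictMonoOn_of_deriv_pos (convex_Icc a b) (hf.continuous.sub hg.continuous).continuousOn
    fun y hy => ?_
  rw [interior_Icc] at hy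
  rw [deriv_fun_sub (hf y) (hg y), sub_pos]
  exact hlt y (Ioo_subset_Ico_self hy)

theorem le_on_Icc_of_deriv_lt {f g : ℝ → ℝ} {a b : ℝ} (hf : Differentiable ℝ f)
    (hg : Differentiable ℝ g) (hlt : ∀ y ∈ Ico a b, deriv g y < deriv f y) (ha : f a = g a) :
    ∀ y ∈ Icc a b, g y ≤ f y := fun y hy => by
  have := (strictMonoOn_sub_of_deriv_lt hf hg hlt).monotoneOn (left_mem_Icc.2 (hy.1.trans hy.2))
    hy hy.1
  simp only [ha, sub_self] at this
  linarith

theorem hasDerivAt_ite_le {f g : ℝ → ℝ} {a f' : ℝ} (hf : HasDerivAt f f' a)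
    (hg : HasDerivAt g f' a) (hfg : f a = g a) :
    HasDerivAt (fun y => if y ≤ a then f y else g y) f' a := by
  have hleft : HasDerivWithinAt (fun y => if y ≤ a then f y else g y) f' (Iic a) a :=
    hf.hasDerivWithinAt.congr (fun z hz => if_pos hz) (if_pos le_rfl)
  have hright : HasDerivWithinAt (fun y => if y ≤ a then f y else g y) f' (Ici a) a := by
    refine hg.hasDerivWithinAt.congr (fun z hz => ?_) (by simp [hfg])
    split_ifs with hza
    · rw [le_antisymm hza hz, hfg]
    · rfl
  simpa [Iic_union_Ici, hasDerivWithinAt_univ] using hleft.union hright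

/-- The maximiser of `u ↦ u * y - C u` over `u ≥ 0`; it is `F'(y)` for `y < 0`. -/
noncomputable def lfDeriv (C h : ℝ → ℝ) (y : ℝ) : ℝ := if deriv C 0 ≤ y then h y else 0

section Legendre

variable {C h : ℝ → ℝ}

theorem ConvexOn.strictMonoOn_deriv_of_leftInverse (hconv : ConvexOn ℝ (Ici 0) C)
    (hd : Differentiable ℝ C) (hinv : ∀ u ≥ (0 : ℝ), h (deriv C u) = u) :
    StrictMonoOn (deriv C) (Ici 0) :=
  (hconv.monotoneOn_deriv fun x _ => hd x).strictMonoOn_of_injOn fun u hu v hv huv => by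
    simpa [hinv u hu, hinv v hv] using congrArg h huv

variable (hinv : ∀ y : ℝ, deriv C 0 ≤ y → y < 0 → 0 ≤ h y ∧ deriv C (h y) = y)
include hinv

theorem lfDeriv_nonneg {y : ℝ} (hy : y < 0) : 0 ≤ lfDeriv C h y := by
  unfold lfDeriv
  split_ifs with hC0
  · exact (hinv y hC0 hy).1
  · exact le_rfl

theorem le_deriv_lfDeriv {y : ℝ} (hy : y < 0) : y ≤ deriv C (lfDeriv C h y) := by
  unfold lfDeriv
  split_ifs with hC0
  · exact (hinv y hC0 hy).2.ge
  · exact (not_le.1 hC0).le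

theorem lfDeriv_le_of_lt_deriv (hmono : MonotoneOn (deriv C) (Ici 0)) {v z : ℝ} (hv : 0 ≤ v)
    (hz : z < 0) (hzv : z < deriv C v) : lfDeriv C h z ≤ v := by
  unfold lfDeriv
  split_ifs with hC0
  · obtain ⟨hz0, hCz⟩ := hinv z hC0 hz
    by_contra! hlt
    have := hmono hv hz0 hlt.le
    linarith
  · exact hv

theorem le_lfDeriv_of_deriv_lt (hmono : MonotoneOn (deriv C) (Ici 0)) {v z : ℝ} (hv : 0 ≤ v)
    (hvz : deriv C v < z) (hz : z < 0) : v ≤ lfDeriv C h z := by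
  have hC0 : deriv C 0 ≤ z := (hmono self_mem_Ici hv hv).trans hvz.le
  obtain ⟨hz0, hCz⟩ := hinv z hC0 hz
  rw [lfDeriv, if_pos hC0]
  by_contra! hlt
  have := hmono hz0 hv hlt.le
  linarith

theorem continuousAt_lfDeriv (hmono : StrictMonoOn (deriv C) (Ici 0)) {y : ℝ} (hy : y < 0) :
    ContinuousAt (lfDeriv C h) y := by
  set u := lfDeriv C h y
  have hu : 0 ≤ u := lfDeriv_nonneg hinv hy
  refine tendsto_order.2 ⟨fun a ha => ?_, fun b hb => ?_⟩
  · rcases lt_or_ge a 0 with ha0 | ha0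
    · filter_upwards [eventually_lt_nhds hy] with z hz
      exact ha0.trans_le (lfDeriv_nonneg hinv hz)
    have hC0 : deriv C 0 ≤ y := by
      by_contra hC0
      have : u = 0 := if_neg hC0
      linarith
    have hCu : deriv C u = y := by
      simp only [u, lfDeriv, if_pos hC0]
      exact (hinv y hC0 hy).2
    have hlt : deriv C ((a + u) / 2) < y :=
      hCu ▸ hmono (mem_Ici.2 (by linarith)) hu (by linarith)
    filter_upwards [eventually_gt_nhds hlt, eventually_lt_nhds hy] with z hz hz0
    have := le_lfDeriv_of_deriv_lt hinv hmono.monotoneOn (by linarith) hz hz0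
    linarith
  · have hlt : y < deriv C ((u + b) / 2) :=
      (le_deriv_lfDeriv hinv hy).trans_lt (hmono hu (mem_Ici.2 (by linarith)) (by linarith))
    filter_upwards [eventually_lt_nhds hlt, eventually_lt_nhds hy] with z hz hz0
    have := lfDeriv_le_of_lt_deriv hinv hmono.monotoneOn (by linarith) hz0 hz
    linarith

variable (hconv : ConvexOn ℝ (Ici 0) C) (hd : Differentiable ℝ C)
include hconv hd

theorem isGreatest_lfDeriv {y : ℝ} (hy : y < 0) :
    IsGreatest ((fun u => u * y - C u) '' Ici 0) (lfDeriv C h y * y - C (lfDeriv C h y)) := by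
  set u := lfDeriv C h y
  have hu : 0 ≤ u := lfDeriv_nonneg hinv hy
  refine ⟨⟨u, hu, rfl⟩, ?_⟩
  rintro _ ⟨w, hw, rfl⟩
  have htangent := hconv.add_deriv_mul_sub_le hu hw (hd u)
  have hcross : (w - u) * (y - deriv C u) ≤ 0 := by
    by_cases hC0 : deriv C 0 ≤ y
    · simp [u, lfDeriv, hC0, (hinv y hC0 hy).2]
    · have hu0 : u = 0 := if_neg hC0
      rw [hu0, sub_zero]
      exact mul_nonpos_of_nonneg_of_nonpos hw (by linarith [not_le.1 hC0])
  show w * y - C w ≤ u * y - C u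
  linarith

theorem LF_eq_of_neg {y : ℝ} (hy : y < 0) : LF C y = lfDeriv C h y * y - C (lfDeriv C h y) :=
  (isGreatest_lfDeriv hinv hconv hd hy).csSup_eq

theorem lfDeriv_mul_sub_le_LF_sub {y z : ℝ} (hy : y < 0) (hz : z < 0) :
    lfDeriv C h y * (z - y) ≤ LF C z - LF C y := by
  have hmax : lfDeriv C h y * z - C (lfDeriv C h y) ≤ LF C z - 0 := by
    rw [LF_eq_of_neg hinv hconv hd hz, sub_zero]
    exact (isGreatest_lfDeriv hinv hconv hd hz).2 ⟨_, lfDeriv_nonneg hinv hy, rfl⟩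
  rw [LF_eq_of_neg hinv hconv hd hy]
  linarith

theorem hasDerivAt_LF (hleft : ∀ u ≥ (0 : ℝ), h (deriv C u) = u) {y : ℝ} (hy : y < 0) :
    HasDerivAt (LF C) (lfDeriv C h y) y := by
  refine hasDerivAt_of_subgradient_of_continuousAt ?_
    (continuousAt_lfDeriv hinv (hconv.strictMonoOn_deriv_of_leftInverse hd hleft) hy)
  filter_upwards [eventually_lt_nhds hy] with z hz
  exact ⟨lfDeriv_mul_sub_le_LF_sub hinv hconv hd hy hz,
    lfDeriv_mul_sub_le_LF_sub hinv hconv hd hz hy⟩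

theorem hasDerivAt_Ftilde (hleft : ∀ u ≥ (0 : ℝ), h (deriv C u) = u) {δ : ℝ} (hδ : 0 < δ)
    (hδC : deriv C 0 ≤ -δ) (y : ℝ) : HasDerivAt (Ftilde C h δ) (lfDeriv C h (min y (-δ))) y := by
  have hLF {z : ℝ} (hz : z < 0) := hasDerivAt_LF hinv hconv hd hleft hz
  have hslope : lfDeriv C h (-δ) = h (-δ) := if_pos hδC
  have hlin (z : ℝ) : HasDerivAt (fun z => h (-δ) * (z + δ) + LF C (-δ)) (h (-δ)) z := by
    simpa using (((hasDerivAt_id z).add_const δ).const_mul (h (-δ))).add_const (LF C (-δ))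
  rcases lt_trichotomy y (-δ) with hlt | rfl | hgt
  · rw [min_eq_left hlt.le]
    refine (hLF (by linarith)).congr_of_eventuallyEq ?_
    filter_upwards [eventually_lt_nhds hlt] with z hz
    exact if_pos hz.le
  · rw [min_self, hslope]
    exact hasDerivAt_ite_le (hslope ▸ hLF (by linarith)) (hlin _) (by simp)
  · rw [min_eq_right hgt.le, hslope]
    refine (hlin y).congr_of_eventuallyEq ?_
    filter_upwards [eventually_gt_nhds hgt] with z hz
    exact if_neg (not_le.2 hz)

theorem monotone_Ftilde (hleft : ∀ u ≥ (0 : ℝ), h (deriv C u) = u) {δ : ℝ} (hδ : 0 < δ)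
    (hδC : deriv C 0 ≤ -δ) : Monotone (Ftilde C h δ) := by
  have hF := hasDerivAt_Ftilde hinv hconv hd hleft hδ hδC
  refine monotone_of_deriv_nonneg (fun y => (hF y).differentiableAt) fun y => ?_
  rw [(hF y).deriv]
  exact lfDeriv_nonneg hinv ((min_le_right y (-δ)).trans_lt (by linarith))

end Legendre

namespace SolvesFtildeODE

variable {C h : ℝ → ℝ} {δ σ θ α p : ℝ}

theorem energy_eq {r : ℝ} {W : ℝ → ℝ} (hF : Differentiable ℝ (Ftilde C h δ))
    (hW : SolvesFtildeODE C h δ σ θ α p r W) {x : ℝ} (hx : 0 ≤ x) :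
    σ ^ 2 / 2 * deriv W x - Ftilde C h δ (W x) - θ * x * W x - α * ∫ s in (0 : ℝ)..x, W s
      = σ ^ 2 / 2 * r - Ftilde C h δ (-p) := by
  obtain ⟨hW2, hW0, hW'0, hode⟩ := hW
  have hWd : Differentiable ℝ W := hW2.differentiable two_ne_zero
  let E : ℝ → ℝ := fun t =>
    σ ^ 2 / 2 * deriv W t - Ftilde C h δ (W t) - θ * t * W t - α * ∫ s in (0 : ℝ)..t, W s
  have hE (t : ℝ) (ht : 0 ≤ t) : HasDerivAt E 0 t := by
    have := ((((hW2.differentiable_deriv_two t).hasDerivAt.const_mul (σ ^ 2 / 2)).sub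
      ((hF (W t)).hasDerivAt.comp t (hWd t).hasDerivAt)).sub
      (((hasDerivAt_id' t).const_mul θ).mul (hWd t).hasDerivAt)).sub
      ((hWd.continuous.integral_hasStrictDerivAt 0 t).hasDerivAt.const_mul α)
    exact this.congr_deriv (by linarith [hode t ht])
  have hconst := constant_of_has_deriv_right_zero
    (fun t ht => (hE t ht.1).continuousAt.continuousWithinAt)
    (fun t ht => (hE t ht.1).hasDerivWithinAt) x ⟨hx, le_rfl⟩
  calc E x = E 0 := hconst
    _ = σ ^ 2 / 2 * r - Ftilde C h δ (-p) := by simp [E, hW0, hW'0]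

theorem deriv_lt_deriv {r₁ r₂ : ℝ} {W₁ W₂ : ℝ → ℝ} (hF : Differentiable ℝ (Ftilde C h δ))
    (hFm : Monotone (Ftilde C h δ)) (hσ : σ ≠ 0) (hθ : 0 ≤ θ) (hα : 0 ≤ α) (hr : r₂ < r₁)
    (hW₁ : SolvesFtildeODE C h δ σ θ α p r₁ W₁) (hW₂ : SolvesFtildeODE C h δ σ θ α p r₂ W₂)
    {x : ℝ} (hx : 0 ≤ x) : deriv W₂ x < deriv W₁ x := by
  have hW₁d : Differentiable ℝ W₁ := hW₁.1.differentiable two_ne_zero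
  have hW₂d : Differentiable ℝ W₂ := hW₂.1.differentiable two_ne_zero
  rw [← sub_pos]
  refine ((hW₁.1.continuous_deriv one_le_two).sub (hW₂.1.continuous_deriv one_le_two))
    |>.pos_of_forall_Ico_pos_imp_pos (fun x₀ hx₀ hpos => ?_) hx
  have hle := le_on_Icc_of_deriv_lt hW₁d hW₂d (fun y hy => sub_pos.1 (hpos y hy))
    (by rw [hW₁.2.1, hW₂.2.1])
  have hWx₀ : W₂ x₀ ≤ W₁ x₀ := hle x₀ (right_mem_Icc.2 hx₀)
  have hint : ∫ s in (0 : ℝ)..x₀, W₂ s ≤ ∫ s in (0 : ℝ)..x₀, W₁ s :=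
    intervalIntegral.integral_mono_on hx₀ (hW₂d.continuous.intervalIntegrable _ _)
      (hW₁d.continuous.intervalIntegrable _ _) hle
  have hσ2 : 0 < σ ^ 2 / 2 := by positivity
  -- the difference of the two conservation laws at `x₀`
  have key : 0 < σ ^ 2 / 2 * (deriv W₁ x₀ - deriv W₂ x₀) := by
    nlinarith [hW₁.energy_eq hF hx₀, hW₂.energy_eq hF hx₀, hFm hWx₀,
      mul_le_mul_of_nonneg_left hint hα, mul_le_mul_of_nonneg_left hWx₀ (mul_nonneg hθ hx₀)]
  exact pos_of_mul_pos_right key hσ2.le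

end SolvesFtildeODE

theorem statement2_general
    (C h : ℝ → ℝ) (σ θ α p δ : ℝ)
    (hσ : 0 < σ) (hθ : 0 < θ) (hα : 0 < α)
    (hC2 : ContDiff ℝ 2 C)
    (hCconv : ConvexOn ℝ (Set.Ici 0) C)
    (hinv₁ : ∀ u ≥ (0 : ℝ), h (deriv C u) = u)
    (hinv₂ : ∀ y : ℝ, deriv C 0 ≤ y → y < 0 → 0 ≤ h y ∧ deriv C (h y) = y)
    (hδ0 : 0 < δ) (hδ : δ < min p (-deriv C 0))
    (r₁ r₂ : ℝ) (hr₁₂ : r₂ < r₁)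
    (W₁ W₂ : ℝ → ℝ)
    (hW₁ : SolvesFtildeODE C h δ σ θ α p r₁ W₁)
    (hW₂ : SolvesFtildeODE C h δ σ θ α p r₂ W₂) :
    ∀ x ≥ (0 : ℝ),
      (∀ y ∈ Set.Icc (0 : ℝ) x, W₁ y < 0 ∧ W₂ y < 0) →
      deriv W₂ x < deriv W₁ x ∧
      W₂ x ≤ W₁ x ∧ (W₂ x = W₁ x → x = 0) ∧
      (∫ s in (0 : ℝ)..x, W₂ s) + 1 / α * (σ ^ 2 / 2 * r₂ - Ftilde C h δ (-p))
        < (∫ s in (0 : ℝ)..x, W₁ s) + 1 / α * (σ ^ 2 / 2 * r₁ - Ftilde C h δ (-p)) := by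
  intro x hx _
  have hd : Differentiable ℝ C := hC2.differentiable two_ne_zero
  have hδC : deriv C 0 ≤ -δ := by linarith [min_le_right p (-deriv C 0)]
  have hF := hasDerivAt_Ftilde hinv₂ hCconv hd hinv₁ hδ0 hδC
  have hlt (y : ℝ) (hy : 0 ≤ y) : deriv W₂ y < deriv W₁ y :=
    SolvesFtildeODE.deriv_lt_deriv (fun y => (hF y).differentiableAt)
      (monotone_Ftilde hinv₂ hCconv hd hinv₁ hδ0 hδC) hσ.ne' hθ.le hα.le hr₁₂ hW₁ hW₂ hy
  have hW₁d : Differentiable ℝ W₁ := hW₁.1.differentiable two_ne_zero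
  have hW₂d : Differentiable ℝ W₂ := hW₂.1.differentiable two_ne_zero
  have hlt_Ico : ∀ y ∈ Ico 0 x, deriv W₂ y < deriv W₁ y := fun y hy => hlt y hy.1
  have hW0 : W₁ 0 = W₂ 0 := by rw [hW₁.2.1, hW₂.2.1]
  have hle := le_on_Icc_of_deriv_lt hW₁d hW₂d hlt_Ico hW0
  refine ⟨hlt x hx, hle x (right_mem_Icc.2 hx), fun heq => ?_, ?_⟩
  · by_contra hx0
    have := strictMonoOn_sub_of_deriv_lt hW₁d hW₂d hlt_Ico (left_mem_Icc.2 hx)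
      (right_mem_Icc.2 hx) (lt_of_le_of_ne hx (Ne.symm hx0))
    simp only [hW0, heq, sub_self] at this
    exact lt_irrefl 0 this
  · have hint : ∫ s in (0 : ℝ)..x, W₂ s ≤ ∫ s in (0 : ℝ)..x, W₁ s :=
      intervalIntegral.integral_mono_on hx (hW₂d.continuous.intervalIntegrable _ _)
      (hW₁d.continuous.intervalIntegrable _ _) hle
    have hr : 1 / α * (σ ^ 2 / 2 * r₂ - Ftilde C h δ (-p))
        < 1 / α * (σ ^ 2 / 2 * r₁ - Ftilde C h δ (-p)) := by gcongr
    linarith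

/-- Comparison lemma: if `0 < r₂ < r₁` and `Wᵢ` solve the `F̃`-ODE with initial slopes `rᵢ`, then
on `[0, c₁ ∧ c₂)` (where `cᵢ` is the first zero of `Wᵢ`, encoded here by the hypothesis that both
solutions are negative on `[0, x]`) one has `W₂'(x) < W₁'(x)`, `W₂(x) ≤ W₁(x)` with equality only at
`x = 0`, and `Y₂(x) < Y₁(x)` where `Yᵢ(x) = ∫₀ˣ Wᵢ + (1/α)((σ²/2)rᵢ − F̃(−p))`. -/
theorem statement2
    (C h : ℝ → ℝ) (σ θ α p δ : ℝ)
    (hσ : 0 < σ) (hθ : 0 < θ) (hα : 0 < α) (hp : 0 < p)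
    (hC2 : ContDiff ℝ 2 C)
    (hCanti : AntitoneOn C (Set.Ici 0))
    (hCconv : ConvexOn ℝ (Set.Ici 0) C)
    (hC0 : 0 < C 0)
    (hClim : Tendsto C atTop (nhds 0))
    (hC'' : ∀ u ≥ (0 : ℝ), 0 < deriv (deriv C) u)
    (hC'0 : deriv C 0 < 0)
    (hinv₁ : ∀ u ≥ (0 : ℝ), h (deriv C u) = u)
    (hinv₂ : ∀ y : ℝ, deriv C 0 ≤ y → y < 0 → 0 ≤ h y ∧ deriv C (h y) = y)
    (hδ0 : 0 < δ) (hδ : δ < min p (-deriv C 0))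
    (r₁ r₂ : ℝ) (hr₂ : 0 < r₂) (hr₁₂ : r₂ < r₁)
    (W₁ W₂ : ℝ → ℝ)
    (hW₁ : SolvesFtildeODE C h δ σ θ α p r₁ W₁)
    (hW₂ : SolvesFtildeODE C h δ σ θ α p r₂ W₂) :
    ∀ x ≥ (0 : ℝ),
      (∀ y ∈ Set.Icc (0 : ℝ) x, W₁ y < 0 ∧ W₂ y < 0) →
      deriv W₂ x < deriv W₁ x ∧
      W₂ x ≤ W₁ x ∧ (W₂ x = W₁ x → x = 0) ∧
      (∫ s in (0 : ℝ)..x, W₂ s) + 1 / α * (σ ^ 2 / 2 * r₂ - Ftilde C h δ (-p))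
        < (∫ s in (0 : ℝ)..x, W₁ s) + 1 / α * (σ ^ 2 / 2 * r₁ - Ftilde C h δ (-p)) :=
  statement2_general C h σ θ α p δ hσ hθ hα hC2 hCconv hinv₁ hinv₂ hδ0 hδ r₁ r₂ hr₁₂ W₁ W₂ hW₁ hW₂
end

section
/- Let 0 < c < ∞ and suppose W : [0, c) → ℝ solves the integral equation with parameter r (for some r ≥ 0) and satisfies W(x) < 0 for all x ∈ [0, c). If W(x) → 0 as x → c⁻, then the limit lim_{x → c⁻} W'(x) exists and is strictly positive. In other words, a strictly negative solution of the integral equation cannot reach the level 0 tangentially. -/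
/-!
Let `K = α K_r`. In the equation as written the integral binder extends over `+ α K_r`, so the
integral term is `α I(x)` with `I(x) = ∫₀ˣ (W + K)`. As `x → c⁻` the right-hand side tends to
`α I(c)`, because `F(W(x)) → F(0) = 0` and `W` is integrable up to `c`; hence `W'` tends to
`α I(c) / (σ²/2)`. Since `C ≥ 0`, `F ≤ 0` on `(-∞, 0]`, so `K ≥ 0` and `(σ²/2) W' ≤ α I` on
`[0, c)`. If `I(c) ≤ 0`, then `I < 0` just below `c` (for `K = 0` because `W < 0`, for `K > 0`
because `W + K > 0` near `c`), so `W` decreases just below `c`: impossible for a negative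
function tending to `0`.
-/

open Set Filter Topology MeasureTheory

lemma AntitoneOn.le_of_tendsto_atTop {f : ℝ → ℝ} {a l : ℝ} (hf : AntitoneOn f (Ici a))
    (hlim : Tendsto f atTop (𝓝 l)) : ∀ u ≥ a, l ≤ f u := fun u hu =>
  le_of_tendsto hlim <| by
    filter_upwards [eventually_ge_atTop u] with v hv
    exact hf (mem_Ici.2 hu) (mem_Ici.2 (hu.trans hv)) hv

section LegendreFenchel

variable {C : ℝ → ℝ} (hC : ∀ u ≥ (0 : ℝ), 0 ≤ C u)
include hC

lemma LF_nonpos {y : ℝ} (hy : y ≤ 0) : LF C y ≤ 0 := by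
  refine Real.sSup_le ?_ le_rfl
  rintro _ ⟨u, hu, rfl⟩
  nlinarith [hC u hu, mul_nonpos_of_nonneg_of_nonpos (mem_Ici.1 hu) hy]

lemma le_LF {y u : ℝ} (hy : y ≤ 0) (hu : 0 ≤ u) : u * y - C u ≤ LF C y :=
  le_csSup ⟨0, by rintro _ ⟨v, hv, rfl⟩; nlinarith [hC v hv,
    mul_nonpos_of_nonneg_of_nonpos (mem_Ici.1 hv) hy]⟩ ⟨u, hu, rfl⟩

lemma tendsto_LF_nhdsLE_zero (hlim : Tendsto C atTop (𝓝 0)) :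
    Tendsto (LF C) (𝓝[≤] 0) (𝓝 0) := by
  refine tendsto_order.2 ⟨fun a ha => ?_, fun b hb =>
    eventually_nhdsWithin_of_forall fun y hy => (LF_nonpos hC hy).trans_lt hb⟩
  obtain ⟨u, hCu, hu⟩ :=
    ((hlim.eventually (gt_mem_nhds (neg_pos.2 ha))).and (eventually_ge_atTop 0)).exists
  have hlin : Tendsto (fun y => u * y - C u) (𝓝[≤] 0) (𝓝 (-C u)) := by
    simpa using (Continuous.tendsto (f := fun y => u * y - C u) (by fun_prop) 0).mono_left
      nhdsWithin_le_nhds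
  filter_upwards [hlin.eventually (lt_mem_nhds (show a < -C u by linarith)), self_mem_nhdsWithin]
    with y hy hy0
  exact hy.trans_le (le_LF hC hy0 hu)

end LegendreFenchel

lemma integrableOn_Icc_of_continuousOn_Ioo {f : ℝ → ℝ} {a b la lb : ℝ}
    (hf : ContinuousOn f (Ioo a b)) (ha : Tendsto f (𝓝[>] a) (𝓝 la))
    (hb : Tendsto f (𝓝[<] b) (𝓝 lb)) : IntegrableOn f (Icc a b) := by
  have hext := (continuousOn_Icc_extendFrom_Ioo hf ha hb).integrableOn_Icc (μ := volume)
  rw [integrableOn_Icc_iff_integrableOn_Ioo] at hext ⊢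
  exact hext.congr_fun (extendFrom_extends hf) measurableSet_Ioo

lemma eventually_ge_of_tendsto_nhdsLT_of_deriv_nonpos {f f' : ℝ → ℝ} {c l : ℝ}
    (hf : ∀ᶠ x in 𝓝[<] c, HasDerivAt f (f' x) x ∧ f' x ≤ 0)
    (hlim : Tendsto f (𝓝[<] c) (𝓝 l)) : ∀ᶠ x in 𝓝[<] c, l ≤ f x := by
  obtain ⟨a, hac, hsub⟩ := mem_nhdsLT_iff_exists_Ioo_subset.1 hf
  have hanti : AntitoneOn f (Ioo a c) := by
    refine antitoneOn_of_hasDerivWithinAt_nonpos (convex_Ioo a c)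
      (fun x hx => (hsub hx).1.continuousAt.continuousWithinAt) (fun x hx => ?_)
      (fun x hx => (hsub (interior_subset hx)).2)
    exact (hsub (interior_subset hx)).1.hasDerivWithinAt
  filter_upwards [Ioo_mem_nhdsLT hac] with x hx
  refine le_of_tendsto hlim ?_
  filter_upwards [Ioo_mem_nhdsLT hx.2] with y hy
  exact hanti hx ⟨hx.1.trans hy.1, hy.2⟩ hy.1.le

lemma eventually_integral_neg_of_integral_nonpos {W : ℝ → ℝ} {c K : ℝ} (hc : 0 < c)
    (hK : 0 ≤ K) (hWint : IntegrableOn W (Icc 0 c)) (hneg : ∀ x ∈ Ioo 0 c, W x < 0)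
    (hlim : Tendsto W (𝓝[<] c) (𝓝 0)) (hI : ∫ s in 0..c, (W s + K) ≤ 0) :
    ∀ᶠ x in 𝓝[<] c, ∫ s in 0..x, (W s + K) < 0 := by
  have hint : ∀ x ∈ Icc 0 c, ∀ y ∈ Icc 0 c,
      IntervalIntegrable (fun s => W s + K) volume x y := fun x hx y hy =>
    ((hWint.add (integrableOn_const measure_Icc_lt_top.ne)).mono_set
      (uIcc_subset_Icc hx hy)).intervalIntegrable
  rcases hK.eq_or_lt with rfl | hKpos
  · simp only [add_zero] at hint ⊢
    filter_upwards [Ioo_mem_nhdsLT hc] with x hx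
    have hpos := intervalIntegral.intervalIntegral_pos_of_pos_on (f := fun s => -W s)
      (hint 0 ⟨le_rfl, hc.le⟩ x (Ioo_subset_Icc_self hx)).neg
      (fun s hs => neg_pos.2 (hneg s ⟨hs.1, hs.2.trans hx.2⟩)) hx.1
    rw [intervalIntegral.integral_neg] at hpos
    linarith
  · have hWK : ∀ᶠ s in 𝓝[<] c, 0 < W s + K :=
      (hlim.add_const K).eventually (lt_mem_nhds (by simpa using hKpos))
    obtain ⟨a, hac, hsub⟩ := mem_nhdsLT_iff_exists_Ioo_subset.1 (hWK.and (Ioo_mem_nhdsLT hc))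
    filter_upwards [Ioo_mem_nhdsLT hac] with x hx
    have hx0 : x ∈ Icc 0 c := Ioo_subset_Icc_self (hsub hx).2
    have htail := intervalIntegral.intervalIntegral_pos_of_pos_on (hint x hx0 c ⟨hc.le, le_rfl⟩)
      (fun s hs => (hsub ⟨hx.1.trans hs.1, hs.2⟩).1) hx.2
    have hsplit := intervalIntegral.integral_add_adjacent_intervals
      (hint 0 ⟨le_rfl, hc.le⟩ x hx0) (hint x hx0 c ⟨hc.le, le_rfl⟩)
    linarith

lemma tendsto_integral_nhdsLT_of_integrableOn {f : ℝ → ℝ} {a b : ℝ} (hab : a < b)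
    (hf : IntegrableOn f (Icc a b)) :
    Tendsto (fun x => ∫ s in a..x, f s) (𝓝[<] b) (𝓝 (∫ s in a..b, f s)) := by
  have hcont := intervalIntegral.continuousOn_primitive_interval (f := f) (a := a) (b := b)
    (by rwa [uIcc_of_le hab.le])
  rw [← nhdsWithin_Ico_eq_nhdsLT hab]
  exact ((hcont b right_mem_uIcc).mono (uIcc_of_le hab.le ▸ Ico_subset_Icc_self)).tendsto

section IntegralEquation

variable {C W W' : ℝ → ℝ} {σ θ α K c : ℝ} (hC : ∀ u ≥ (0 : ℝ), 0 ≤ C u) (hσ : σ ≠ 0)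
  (hWint : IntegrableOn W (Icc 0 c)) (hneg : ∀ x ∈ Ico 0 c, W x < 0)
  (hlim : Tendsto W (𝓝[<] c) (𝓝 0))
  (hIE : ∀ x ∈ Ico 0 c,
    σ ^ 2 / 2 * W' x = LF C (W x) + θ * x * W x + α * ∫ s in (0 : ℝ)..x, (W s + K))
include hC hσ hWint hneg hlim hIE

lemma tendsto_nhdsLT_of_integralEquation (hc : 0 < c) (hClim : Tendsto C atTop (𝓝 0)) :
    Tendsto W' (𝓝[<] c) (𝓝 (α * (∫ s in (0 : ℝ)..c, (W s + K)) / (σ ^ 2 / 2))) := by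
  have hIco : Ico 0 c ∈ 𝓝[<] c := Ico_mem_nhdsLT hc
  have hF := (tendsto_LF_nhdsLE_zero hC hClim).comp
    (tendsto_nhdsWithin_of_tendsto_nhds_of_eventually_within _ hlim
      (mem_of_superset hIco fun x hx => (hneg x hx).le))
  have hWKint : IntegrableOn (fun s => W s + K) (Icc 0 c) :=
    hWint.add (integrableOn_const measure_Icc_lt_top.ne)
  have hI := tendsto_integral_nhdsLT_of_integrableOn hc hWKint
  have hrhs := (hF.add (((tendsto_id.mono_left nhdsWithin_le_nhds).const_mul θ).mul hlim)).add
    (hI.const_mul α)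
  simp only [mul_zero, add_zero, zero_add] at hrhs
  refine (hrhs.div_const (σ ^ 2 / 2)).congr' ?_
  filter_upwards [hIco] with x hx
  rw [Function.comp_apply, id, ← hIE x hx]
  field_simp

lemma integral_pos_of_integralEquation (hc : 0 < c) (hθ : 0 ≤ θ) (hα : 0 < α) (hK : 0 ≤ K)
    (hderiv : ∀ x ∈ Ico 0 c, HasDerivAt W (W' x) x) : 0 < ∫ s in (0 : ℝ)..c, (W s + K) := by
  by_contra! hIc
  have hIco : Ico 0 c ∈ 𝓝[<] c := Ico_mem_nhdsLT hc
  have hIneg := eventually_integral_neg_of_integral_nonpos hc hK hWint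
    (fun x hx => hneg x (Ioo_subset_Ico_self hx)) hlim hIc
  have hdec : ∀ᶠ x in 𝓝[<] c, HasDerivAt W (W' x) x ∧ W' x ≤ 0 := by
    filter_upwards [hIco, hIneg] with x hx hIx
    have hθxW := mul_nonpos_of_nonneg_of_nonpos (mul_nonneg hθ hx.1) (hneg x hx).le
    refine ⟨hderiv x hx, nonpos_of_mul_nonpos_right ?_ (by positivity : 0 < σ ^ 2 / 2)⟩
    nlinarith [hIE x hx, LF_nonpos hC (hneg x hx).le, mul_neg_of_pos_of_neg hα hIx]
  obtain ⟨x, hx0, hx⟩ := ((eventually_ge_of_tendsto_nhdsLT_of_deriv_nonpos hdec hlim).and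
    (mem_of_superset hIco hneg)).exists
  exact hx0.not_gt hx

end IntegralEquation

theorem statement3_general
    (C : ℝ → ℝ) (σ θ α p : ℝ)
    (hσ : 0 < σ) (hθ : 0 < θ) (hα : 0 < α) (hp : 0 < p)
    (hCanti : AntitoneOn C (Set.Ici 0))
    (hClim : Tendsto C atTop (nhds 0))
    (c r : ℝ) (hc : 0 < c) (hr : 0 ≤ r)
    (W W' : ℝ → ℝ)
    (hderiv : ∀ x ∈ Set.Ico (0 : ℝ) c, HasDerivAt W (W' x) x)
    (hIE : ∀ x ∈ Set.Ico (0 : ℝ) c,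
      σ ^ 2 / 2 * W' x
        = LF C (W x) + θ * x * W x + α * ∫ s in (0 : ℝ)..x, W s
          + α * (1 / α * (σ ^ 2 / 2 * r - LF C (-p))))
    (hneg : ∀ x ∈ Set.Ico (0 : ℝ) c, W x < 0)
    (hlim : Tendsto W (nhdsWithin c (Set.Iio c)) (nhds 0)) :
    ∃ L : ℝ, 0 < L ∧ Tendsto W' (nhdsWithin c (Set.Iio c)) (nhds L) := by
  have hC := hCanti.le_of_tendsto_atTop hClim
  have hK : 0 ≤ α * (1 / α * (σ ^ 2 / 2 * r - LF C (-p))) := by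
    rw [← mul_assoc, mul_one_div_cancel hα.ne', one_mul]
    nlinarith [LF_nonpos hC (neg_nonpos.2 hp.le)]
  have hWint : IntegrableOn W (Icc 0 c) :=
    integrableOn_Icc_of_continuousOn_Ioo
      (fun x hx => (hderiv x (Ioo_subset_Ico_self hx)).continuousAt.continuousWithinAt)
      ((hderiv 0 ⟨le_rfl, hc⟩).continuousAt.tendsto.mono_left nhdsWithin_le_nhds) hlim
  exact ⟨_, div_pos (mul_pos hα (integral_pos_of_integralEquation hC hσ.ne' hWint hneg hlim hIE
    hc hθ.le hα hK hderiv)) (by positivity),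
    tendsto_nhdsLT_of_integralEquation hC hσ.ne' hWint hneg hlim hIE hc hClim⟩

/-- A strictly negative continuously differentiable solution `W` (with derivative `W'`) on
`[0, c)` of the integral equation `(σ²/2)W'(x) = F(W(x)) + θxW(x) + α∫₀ˣW + αK_r`, with
`W(x) → 0` as `x → c⁻`, cannot reach the level `0` tangentially: the limit of `W'` at `c⁻`
exists and is strictly positive. -/
theorem statement3
    (C : ℝ → ℝ) (σ θ α p : ℝ)
    (hσ : 0 < σ) (hθ : 0 < θ) (hα : 0 < α) (hp : 0 < p)
    (hC2 : ContDiff ℝ 2 C)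
    (hCanti : AntitoneOn C (Set.Ici 0))
    (hCconv : ConvexOn ℝ (Set.Ici 0) C)
    (hC0 : 0 < C 0)
    (hClim : Tendsto C atTop (nhds 0))
    (hC'' : ∀ u ≥ (0 : ℝ), 0 < deriv (deriv C) u)
    (hC'0 : deriv C 0 < 0)
    (c r : ℝ) (hc : 0 < c) (hr : 0 ≤ r)
    (W W' : ℝ → ℝ)
    (hW0 : W 0 = -p)
    (hderiv : ∀ x ∈ Set.Ico (0 : ℝ) c, HasDerivAt W (W' x) x)
    (hW'cont : ContinuousOn W' (Set.Ico 0 c))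
    (hIE : ∀ x ∈ Set.Ico (0 : ℝ) c,
      σ ^ 2 / 2 * W' x
        = LF C (W x) + θ * x * W x + α * ∫ s in (0 : ℝ)..x, W s
          + α * (1 / α * (σ ^ 2 / 2 * r - LF C (-p))))
    (hneg : ∀ x ∈ Set.Ico (0 : ℝ) c, W x < 0)
    (hlim : Tendsto W (nhdsWithin c (Set.Iio c)) (nhds 0)) :
    ∃ L : ℝ, 0 < L ∧ Tendsto W' (nhdsWithin c (Set.Iio c)) (nhds L) :=
  statement3_general C σ θ α p hσ hθ hα hp hCanti hClim c r hc hr W W' hderiv hIE hneg hlim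
end

section
/- There exists r₁ > 0 such that for every r > r₁, the solution W̃_r of the F̃-ODE with initial slope r reaches the level 0 in finite time: the hitting time c_r = inf{ x > 0 : W̃_r(x) = 0 } is finite and W̃_r(c_r) = 0. -/
/-!
Since `C ≥ 0`, the Legendre transform `F` is nondecreasing on `(-∞, 0]`, hence `F̃` is nondecreasing
and `F̃' ≥ 0`. On an interval `[0, s]` where `W' ≥ 0` we have `W ≥ W(0) = -p`, so the right-hand side
of `(σ²/2) W'' = F̃'(W) W' + θ x W' + (θ+α) W` is at least `-(θ+α)p`: `W'' ≥ -K` with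
`K = 2(θ+α)p/σ²`, hence `W'(x) ≥ r - K x`. Up to the first zero of `W'` this shows that `W'` cannot
vanish on `[0, 1]` when `r > K`, and then `W(1) ≥ -p + r - K > 0` when `r > p + K`.
The hitting time is the least zero of `W` in `(0, 1]`.
-/

open Set Filter Topology

lemma nonneg_of_antitoneOn_of_tendsto_zero {C : ℝ → ℝ} (hanti : AntitoneOn C (Ici 0))
    (hlim : Tendsto C atTop (𝓝 0)) {u : ℝ} (hu : 0 ≤ u) : 0 ≤ C u :=
  le_of_tendsto hlim <| by
    filter_upwards [eventually_ge_atTop u] with v hv using hanti hu (hu.trans hv) hv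

lemma monotoneOn_LF {C : ℝ → ℝ} (hC : ∀ u, 0 ≤ u → 0 ≤ C u) : MonotoneOn (LF C) (Iic 0) := by
  intro y₁ _ y₂ hy₂ h
  have hbdd : BddAbove ((fun u => u * y₂ - C u) '' Ici 0) := ⟨0, by
    rintro _ ⟨u, hu, rfl⟩
    nlinarith [hC u hu, mul_nonneg (mem_Ici.1 hu) (neg_nonneg.2 (mem_Iic.1 hy₂))]⟩
  refine csSup_le (nonempty_Ici.image _) ?_
  rintro _ ⟨u, hu, rfl⟩
  exact le_trans (by nlinarith [mul_le_mul_of_nonneg_left h (mem_Ici.1 hu)])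
    (le_csSup hbdd ⟨u, hu, rfl⟩)

lemma monotone_Ftilde_s5 {C h : ℝ → ℝ} {δ : ℝ} (hLF : MonotoneOn (LF C) (Iic 0)) (hδ : 0 ≤ δ)
    (hh : 0 ≤ h (-δ)) : Monotone (Ftilde C h δ) := by
  refine MonotoneOn.Iic_union_Ici (a := -δ) ?_ ?_
  · intro y₁ hy₁ y₂ hy₂ hy
    simp only [Ftilde, if_pos (mem_Iic.1 hy₁), if_pos (mem_Iic.1 hy₂)]
    exact hLF (mem_Iic.2 (by linarith [mem_Iic.1 hy₁])) (mem_Iic.2 (by linarith [mem_Iic.1 hy₂])) hy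
  · have affine : EqOn (Ftilde C h δ) (fun y => h (-δ) * (y + δ) + LF C (-δ)) (Ici (-δ)) := by
      intro y hy
      rcases (mem_Ici.1 hy).eq_or_lt with rfl | hlt
      · simp [Ftilde]
      · simp [Ftilde, not_le.2 hlt]
    refine MonotoneOn.congr ?_ affine.symm
    intro y₁ _ y₂ _ hy
    dsimp only
    nlinarith

lemma exists_first_zero_of_neg_of_nonneg {f : ℝ → ℝ} (hf : Continuous f) {a b : ℝ} (hab : a ≤ b)
    (ha : f a < 0) (hb : 0 ≤ f b) : ∃ c ∈ Ioc a b, f c = 0 ∧ ∀ x ∈ Ico a c, f x < 0 := by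
  set Z := Icc a b ∩ f ⁻¹' {0}
  have hZ : IsCompact Z := isCompact_Icc.inter_right (isClosed_singleton.preimage hf)
  obtain ⟨z, hz, hfz⟩ := intermediate_value_Icc hab hf.continuousOn ⟨ha.le, hb⟩
  obtain ⟨c, ⟨hc, hfc⟩, hleast⟩ := hZ.exists_isLeast ⟨z, hz, hfz⟩
  have hac : a < c := hc.1.lt_of_ne fun hac => by simp_all
  refine ⟨c, ⟨hac, hc.2⟩, hfc, fun x hx => ?_⟩
  by_contra! hfx
  obtain ⟨y, hy, hfy⟩ := intermediate_value_Icc hx.1 hf.continuousOn ⟨ha.le, hfx⟩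
  have := hleast ⟨⟨hy.1, hy.2.trans (hx.2.le.trans hc.2)⟩, hfy⟩
  linarith [hy.2, hx.2]

namespace SolvesFtildeODE

variable {C h : ℝ → ℝ} {δ σ θ α p r : ℝ} {W : ℝ → ℝ}

lemma differentiable (hW : SolvesFtildeODE C h δ σ θ α p r W) : Differentiable ℝ W :=
  hW.1.differentiable (by norm_num)

lemma differentiable_deriv (hW : SolvesFtildeODE C h δ σ θ α p r W) :
    Differentiable ℝ (deriv W) :=
  (contDiff_succ_iff_deriv (n := 1)).1 hW.1 |>.2.2.differentiable one_ne_zero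

lemma neg_le_deriv_deriv (hW : SolvesFtildeODE C h δ σ θ α p r W) (hF : Monotone (Ftilde C h δ))
    (hσ : 0 < σ) (hθ : 0 ≤ θ) (hθα : 0 ≤ θ + α) {x : ℝ} (hx : 0 ≤ x) (hW'x : 0 ≤ deriv W x)
    (hWx : -p ≤ W x) : -(2 * (θ + α) * p / σ ^ 2) ≤ deriv (deriv W) x := by
  have hode := hW.2.2.2 x hx
  have hdrift : 0 ≤ deriv (Ftilde C h δ) (W x) * deriv W x := mul_nonneg hF.deriv_nonneg hW'x
  have htransport : 0 ≤ θ * x * deriv W x := mul_nonneg (mul_nonneg hθ hx) hW'x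
  have hdecay : -((θ + α) * p) ≤ (θ + α) * W x := by nlinarith
  rw [neg_le, le_div_iff₀ (by positivity)]
  linarith

lemma sub_mul_le_deriv (hW : SolvesFtildeODE C h δ σ θ α p r W) (hF : Monotone (Ftilde C h δ))
    (hσ : 0 < σ) (hθ : 0 ≤ θ) (hθα : 0 ≤ θ + α) {s : ℝ} (hW' : ∀ x ∈ Icc 0 s, 0 ≤ deriv W x) :
    ∀ x ∈ Icc 0 s, r - 2 * (θ + α) * p / σ ^ 2 * x ≤ deriv W x := by
  intro x hx
  have hmono : MonotoneOn W (Icc 0 s) :=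
    monotoneOn_of_deriv_nonneg (convex_Icc 0 s) hW.differentiable.continuous.continuousOn
      hW.differentiable.differentiableOn fun y hy => hW' y (interior_subset hy)
  have hlow : ∀ y ∈ Icc 0 s, -p ≤ W y := fun y hy => by
    simpa only [hW.2.1] using hmono (left_mem_Icc.2 (hy.1.trans hy.2)) hy hy.1
  have hslope := (convex_Icc 0 s).mul_sub_le_image_sub_of_le_deriv
    hW.differentiable_deriv.continuous.continuousOn hW.differentiable_deriv.differentiableOn
    (fun y hy => hW.neg_le_deriv_deriv hF hσ hθ hθα (interior_subset hy).1
      (hW' y (interior_subset hy)) (hlow y (interior_subset hy)))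
    0 (left_mem_Icc.2 (hx.1.trans hx.2)) x hx hx.1
  rw [hW.2.2.1] at hslope
  linarith

lemma deriv_nonneg_of_mem_Icc (hW : SolvesFtildeODE C h δ σ θ α p r W)
    (hF : Monotone (Ftilde C h δ)) (hσ : 0 < σ) (hθ : 0 ≤ θ) (hθα : 0 ≤ θ + α)
    (hK : 0 ≤ 2 * (θ + α) * p / σ ^ 2) {s : ℝ} (hr : 2 * (θ + α) * p / σ ^ 2 * s < r) :
    ∀ x ∈ Icc 0 s, 0 ≤ deriv W x := by
  by_contra! ⟨x, hx, hW'x⟩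
  obtain ⟨c, hc, hW'c, hpos⟩ := exists_first_zero_of_neg_of_nonneg
    hW.differentiable_deriv.continuous.neg hx.1 (by simp [hW.2.2.1]; nlinarith [mul_nonneg hK (hx.1.trans hx.2)]) (by simp; linarith)
  simp only [Pi.neg_apply, neg_eq_zero, neg_lt_zero] at hW'c hpos
  have hW'_nonneg : ∀ y ∈ Icc 0 c, 0 ≤ deriv W y := fun y hy => by
    rcases hy.2.eq_or_lt with rfl | hlt
    · exact hW'c.ge
    · exact (hpos y ⟨hy.1, hlt⟩).le
  have := hW.sub_mul_le_deriv hF hσ hθ hθα hW'_nonneg c ⟨hc.1.le, le_rfl⟩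
  linarith [mul_le_mul_of_nonneg_left (hc.2.trans hx.2) hK]

lemma apply_one_pos (hW : SolvesFtildeODE C h δ σ θ α p r W) (hF : Monotone (Ftilde C h δ))
    (hσ : 0 < σ) (hθ : 0 < θ) (hα : 0 < α) (hp : 0 < p)
    (hr : p + 2 * (θ + α) * p / σ ^ 2 < r) : 0 < W 1 := by
  set K := 2 * (θ + α) * p / σ ^ 2
  have hK : 0 ≤ K := by positivity
  have hθα : 0 ≤ θ + α := by positivity
  have hW'_nonneg := hW.deriv_nonneg_of_mem_Icc hF hσ hθ.le hθα hK (s := 1) (by linarith)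
  have hslope := (convex_Icc (0 : ℝ) 1).mul_sub_le_image_sub_of_le_deriv
    hW.differentiable.continuous.continuousOn hW.differentiable.differentiableOn
    (C := r - K) (fun y hy => by
      have := hW.sub_mul_le_deriv hF hσ hθ.le hθα hW'_nonneg y (interior_subset hy)
      linarith [mul_le_of_le_one_right hK (interior_subset hy).2])
    0 (left_mem_Icc.2 zero_le_one) 1 (right_mem_Icc.2 zero_le_one) zero_le_one
  rw [hW.2.1] at hslope
  linarith

end SolvesFtildeODE

theorem statement5_general
    (C h : ℝ → ℝ) (σ θ α p δ : ℝ)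
    (hσ : 0 < σ) (hθ : 0 < θ) (hα : 0 < α) (hp : 0 < p)
    (hCanti : AntitoneOn C (Set.Ici 0))
    (hClim : Tendsto C atTop (nhds 0))
    (hinv₂ : ∀ y : ℝ, deriv C 0 ≤ y → y < 0 → 0 ≤ h y ∧ deriv C (h y) = y)
    (hδ0 : 0 < δ) (hδ : δ < min p (-deriv C 0)) :
    ∃ r₁ : ℝ, 0 < r₁ ∧
      ∀ r : ℝ, r₁ < r →
        ∀ W : ℝ → ℝ, SolvesFtildeODE C h δ σ θ α p r W →
          ∃ c : ℝ, 0 < c ∧ W c = 0 ∧ ∀ y : ℝ, 0 < y → W y = 0 → c ≤ y := by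
  have hh : 0 ≤ h (-δ) := (hinv₂ (-δ) (by linarith [min_le_right p (-deriv C 0)]) (by linarith)).1
  have hF : Monotone (Ftilde C h δ) :=
    monotone_Ftilde_s5 (monotoneOn_LF fun u hu => nonneg_of_antitoneOn_of_tendsto_zero hCanti hClim hu)
      hδ0.le hh
  refine ⟨p + 2 * (θ + α) * p / σ ^ 2, by positivity, fun r hr W hW => ?_⟩
  obtain ⟨c, hc, hWc, hneg⟩ := exists_first_zero_of_neg_of_nonneg hW.differentiable.continuous
    zero_le_one (by rw [hW.2.1]; linarith) (hW.apply_one_pos hF hσ hθ hα hp hr).le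
  refine ⟨c, hc.1, hWc, fun y hy hWy => ?_⟩
  by_contra! hyc
  exact (hneg y ⟨hy.le, hyc⟩).ne hWy

/-- For all sufficiently large initial slopes `r > r₁`, the solution `W̃_r` of the `F̃`-ODE
reaches the level `0` in finite time: the hitting time `c_r = inf{x > 0 : W̃_r(x) = 0}` is finite
and `W̃_r(c_r) = 0` (i.e. there is a first strictly positive zero). -/
theorem statement5
    (C h : ℝ → ℝ) (σ θ α p δ : ℝ)
    (hσ : 0 < σ) (hθ : 0 < θ) (hα : 0 < α) (hp : 0 < p)
    (hC2 : ContDiff ℝ 2 C)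
    (hCanti : AntitoneOn C (Set.Ici 0))
    (hCconv : ConvexOn ℝ (Set.Ici 0) C)
    (hC0 : 0 < C 0)
    (hClim : Tendsto C atTop (nhds 0))
    (hC'' : ∀ u ≥ (0 : ℝ), 0 < deriv (deriv C) u)
    (hC'0 : deriv C 0 < 0)
    (hinv₁ : ∀ u ≥ (0 : ℝ), h (deriv C u) = u)
    (hinv₂ : ∀ y : ℝ, deriv C 0 ≤ y → y < 0 → 0 ≤ h y ∧ deriv C (h y) = y)
    (hδ0 : 0 < δ) (hδ : δ < min p (-deriv C 0)) :
    ∃ r₁ : ℝ, 0 < r₁ ∧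
      ∀ r : ℝ, r₁ < r →
        ∀ W : ℝ → ℝ, SolvesFtildeODE C h δ σ θ α p r W →
          ∃ c : ℝ, 0 < c ∧ W c = 0 ∧ ∀ y : ℝ, 0 < y → W y = 0 → c ≤ y :=
  statement5_general C h σ θ α p δ hσ hθ hα hp hCanti hClim hinv₂ hδ0 hδ
end

section
/- There exist a bounded, twice continuously differentiable function U : [0,∞) → ℝ and a constant M > 0 such that U(x) > 0 for all x ≥ 0, U'(0) = −1, −M ≤ U'(x) < 0 for all x ≥ 0, and (σ²/2)·U''(x) − θ·x·U'(x) − α·U(x) = 0 for all x ≥ 0. -/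
/-!
With `β = α / θ` and `γ = σ² / (4θ)`, consider `J_p(x) = ∫₀^∞ t^p e^{-γt² - xt} dt`
(`gaussLaplace γ p x`).
Differentiating under the integral gives `J_p' = -J_{p+1}`, and integrating the derivative
of `t^β e^{-γt² - xt}` over `(0, ∞)` gives `β J_{β-1} - 2γ J_{β+1} - x J_β = 0`; multiplied
by `θ`, this is the ODE for `U = J_{β-1}`. Each `J_p` is positive and decreasing, so after
normalising `U` by `J_β(0)` (to get `U'(0) = -1`) all the bounds hold with `M = 1`.
-/

open Set Filter MeasureTheory Topology Real

noncomputable def gaussLaplace (γ p x : ℝ) : ℝ :=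
  ∫ t in Ioi (0 : ℝ), t ^ p * exp (-γ * t ^ 2 - x * t)

section GaussLaplace

variable {γ p : ℝ}

lemma rpow_mul_exp_neg_mul_sq_sub_anti {x y t : ℝ} (hxy : x ≤ y) (ht : 0 ≤ t) :
    t ^ p * exp (-γ * t ^ 2 - y * t) ≤ t ^ p * exp (-γ * t ^ 2 - x * t) := by
  gcongr

lemma exp_neg_mul_sq_sub_le (hγ : 0 < γ) (x t : ℝ) :
    exp (-γ * t ^ 2 - x * t) ≤ exp (x ^ 2 / (2 * γ)) * exp (-(γ / 2) * t ^ 2) := by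
  rw [← exp_add, exp_le_exp]
  have hsq : x ^ 2 / (2 * γ) + -(γ / 2) * t ^ 2 - (-γ * t ^ 2 - x * t)
      = (γ * t + x) ^ 2 / (2 * γ) := by
    field_simp
    ring
  linarith [div_nonneg (sq_nonneg (γ * t + x)) (by positivity : (0 : ℝ) ≤ 2 * γ)]

lemma rpow_mul_exp_neg_mul_sq_sub_le (hγ : 0 < γ) (x : ℝ) {t : ℝ} (ht : 0 ≤ t) :
    t ^ p * exp (-γ * t ^ 2 - x * t)
      ≤ exp (x ^ 2 / (2 * γ)) * (t ^ p * exp (-(γ / 2) * t ^ 2)) := by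
  rw [mul_left_comm]
  exact mul_le_mul_of_nonneg_left (exp_neg_mul_sq_sub_le hγ x t) (rpow_nonneg ht p)

lemma integrableOn_rpow_mul_exp_neg_mul_sq_sub (hγ : 0 < γ) (hp : -1 < p) (x : ℝ) :
    IntegrableOn (fun t : ℝ => t ^ p * exp (-γ * t ^ 2 - x * t)) (Ioi 0) := by
  refine Integrable.mono' (((integrableOn_rpow_mul_exp_neg_mul_sq (half_pos hγ) hp)).const_mul
    (exp (x ^ 2 / (2 * γ)))) (by fun_prop) ?_
  refine (ae_restrict_iff' measurableSet_Ioi).2 (Eventually.of_forall fun t (ht : 0 < t) => ?_)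
  rw [norm_of_nonneg (by positivity)]
  exact rpow_mul_exp_neg_mul_sq_sub_le hγ x ht.le

lemma tendsto_rpow_mul_exp_neg_mul_sq_sub (hγ : 0 < γ) (x : ℝ) :
    Tendsto (fun t : ℝ => t ^ p * exp (-γ * t ^ 2 - x * t)) atTop (𝓝 0) := by
  have hgauss : Tendsto (fun t : ℝ => t ^ p * exp (-(γ / 2) * t ^ 2)) atTop (𝓝 0) :=
    (rpow_mul_exp_neg_mul_sq_isLittleO_exp_neg (half_pos hγ) p).isBigO.trans_tendsto
      (tendsto_exp_atBot.comp (tendsto_id.const_mul_atTop_of_neg (by norm_num)))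
  refine squeeze_zero' ?_ ?_
    (by simpa only [mul_zero] using hgauss.const_mul (exp (x ^ 2 / (2 * γ))))
  · filter_upwards [eventually_ge_atTop 0] with t ht
    positivity
  · filter_upwards [eventually_ge_atTop 0] with t ht
    exact rpow_mul_exp_neg_mul_sq_sub_le hγ x ht

lemma hasDerivAt_gaussLaplace (hγ : 0 < γ) (hp : -1 < p) (x₀ : ℝ) :
    HasDerivAt (gaussLaplace γ p) (-gaussLaplace γ (p + 1) x₀) x₀ := by
  have hp1 : -1 < p + 1 := by linarith
  set c := |x₀| + 1
  have hderiv := hasDerivAt_integral_of_dominated_loc_of_deriv_le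
    (F := fun x t => t ^ p * exp (-γ * t ^ 2 - x * t))
    (F' := fun x t => -(t ^ (p + 1) * exp (-γ * t ^ 2 - x * t)))
    (μ := volume.restrict (Ioi 0)) (Metric.ball_mem_nhds x₀ one_pos)
    (Eventually.of_forall fun x => (integrableOn_rpow_mul_exp_neg_mul_sq_sub hγ hp x).1)
    (integrableOn_rpow_mul_exp_neg_mul_sq_sub hγ hp x₀)
    (integrableOn_rpow_mul_exp_neg_mul_sq_sub hγ hp1 x₀).neg.1 ?_
    ((integrableOn_rpow_mul_exp_neg_mul_sq (half_pos hγ) hp1).const_mul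
      (exp ((-c) ^ 2 / (2 * γ)))) ?_
  · have h := hderiv.2
    rw [integral_neg] at h
    exact h
  -- on the unit ball around `x₀` we have `x ≥ -c`, so the integrand at `-c` dominates
  · refine (ae_restrict_iff' measurableSet_Ioi).2
      (Eventually.of_forall fun t (ht : 0 < t) x hx => ?_)
    have hcx : -c ≤ x := by
      rw [Metric.mem_ball, Real.dist_eq] at hx
      linarith [(abs_lt.1 hx).1, neg_abs_le x₀]
    rw [norm_neg, norm_of_nonneg (by positivity)]
    exact (rpow_mul_exp_neg_mul_sq_sub_anti hcx ht.le).trans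
      (rpow_mul_exp_neg_mul_sq_sub_le hγ (-c) ht.le)
  · refine (ae_restrict_iff' measurableSet_Ioi).2
      (Eventually.of_forall fun t (ht : 0 < t) x _ => ?_)
    refine ((((hasDerivAt_id' x).mul_const t).const_sub (-γ * t ^ 2)).exp.const_mul
      (t ^ p)).congr_deriv ?_
    rw [rpow_add_one ht.ne']
    ring

lemma deriv_gaussLaplace (hγ : 0 < γ) (hp : -1 < p) :
    deriv (gaussLaplace γ p) = fun x => -gaussLaplace γ (p + 1) x :=
  funext fun x => (hasDerivAt_gaussLaplace hγ hp x).deriv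

lemma differentiable_gaussLaplace (hγ : 0 < γ) (hp : -1 < p) :
    Differentiable ℝ (gaussLaplace γ p) :=
  fun x => (hasDerivAt_gaussLaplace hγ hp x).differentiableAt

lemma deriv_const_mul_gaussLaplace (hγ : 0 < γ) (hp : -1 < p) (c : ℝ) :
    deriv (fun x => c * gaussLaplace γ p x) = fun x => -c * gaussLaplace γ (p + 1) x := by
  rw [deriv_const_mul_field', deriv_gaussLaplace hγ hp]
  simp only [mul_neg, neg_mul]

lemma contDiff_gaussLaplace (hγ : 0 < γ) (hp : -1 < p) (n : ℕ) :
    ContDiff ℝ n (gaussLaplace γ p) := by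
  induction n generalizing p with
  | zero => exact contDiff_zero.2 (differentiable_gaussLaplace hγ hp).continuous
  | succ n ih =>
    push_cast
    refine contDiff_succ_iff_deriv.2 ⟨differentiable_gaussLaplace hγ hp, by simp, ?_⟩
    rw [deriv_gaussLaplace hγ hp]
    exact (ih (by linarith)).neg

lemma gaussLaplace_pos (hγ : 0 < γ) (hp : -1 < p) (x : ℝ) : 0 < gaussLaplace γ p x := by
  have hpos : ∀ t ∈ Ioi (0 : ℝ), 0 < t ^ p * exp (-γ * t ^ 2 - x * t) :=
    fun t (ht : 0 < t) => by positivity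
  refine (setIntegral_pos_iff_support_of_nonneg_ae ?_
    (integrableOn_rpow_mul_exp_neg_mul_sq_sub hγ hp x)).2 ?_
  · exact (ae_restrict_iff' measurableSet_Ioi).2 (Eventually.of_forall fun t ht => (hpos t ht).le)
  · rw [inter_eq_right.2 fun t ht => Function.mem_support.2 (hpos t ht).ne']
    simp

lemma antitone_gaussLaplace (hγ : 0 < γ) (hp : -1 < p) : Antitone (gaussLaplace γ p) :=
  fun x y hxy => setIntegral_mono_on (integrableOn_rpow_mul_exp_neg_mul_sq_sub hγ hp y)
    (integrableOn_rpow_mul_exp_neg_mul_sq_sub hγ hp x) measurableSet_Ioi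
    fun t (ht : 0 < t) => rpow_mul_exp_neg_mul_sq_sub_anti hxy ht.le

lemma hasDerivAt_rpow_mul_exp_neg_mul_sq_sub (x : ℝ) {t : ℝ} (ht : 0 < t) :
    HasDerivAt (fun t => t ^ p * exp (-γ * t ^ 2 - x * t))
      (p * (t ^ (p - 1) * exp (-γ * t ^ 2 - x * t))
        - 2 * γ * (t ^ (p + 1) * exp (-γ * t ^ 2 - x * t))
        - x * (t ^ p * exp (-γ * t ^ 2 - x * t))) t := by
  have hexp : HasDerivAt (fun t => exp (-γ * t ^ 2 - x * t))
      (exp (-γ * t ^ 2 - x * t) * (-γ * (2 * t) - x)) t := by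
    simpa using (((hasDerivAt_pow 2 t).const_mul (-γ)).sub ((hasDerivAt_id t).const_mul x)).exp
  refine ((hasDerivAt_rpow_const (p := p) (Or.inl ht.ne')).mul hexp).congr_deriv ?_
  rw [rpow_add_one ht.ne']
  ring

lemma gaussLaplace_recurrence (hγ : 0 < γ) {β : ℝ} (hβ : 0 < β) (x : ℝ) :
    β * gaussLaplace γ (β - 1) x - 2 * γ * gaussLaplace γ (β + 1) x
      - x * gaussLaplace γ β x = 0 := by
  have hint : ∀ q : ℝ, -1 < q →
      IntegrableOn (fun t : ℝ => t ^ q * exp (-γ * t ^ 2 - x * t)) (Ioi 0) :=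
    fun q hq => integrableOn_rpow_mul_exp_neg_mul_sq_sub hγ hq x
  have i1 := (hint (β - 1) (by linarith)).const_mul β
  have i2 := (hint (β + 1) (by linarith)).const_mul (2 * γ)
  have i3 := (hint β (by linarith)).const_mul x
  have hcont : ContinuousWithinAt (fun t : ℝ => t ^ β * exp (-γ * t ^ 2 - x * t)) (Ici 0) 0 :=
    ((continuousAt_rpow_const 0 β (Or.inr hβ.le)).mul (by fun_prop)).continuousWithinAt
  have hFTC := integral_Ioi_of_hasDerivAt_of_tendsto hcont
    (fun t ht => hasDerivAt_rpow_mul_exp_neg_mul_sq_sub x ht) ((i1.sub' i2).sub' i3)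
    (tendsto_rpow_mul_exp_neg_mul_sq_sub hγ x)
  rw [integral_sub (i1.sub' i2) i3, integral_sub i1 i2, integral_const_mul, integral_const_mul,
    integral_const_mul, zero_rpow hβ.ne', zero_mul, sub_zero] at hFTC
  exact hFTC

lemma gaussLaplace_ode (hγ : 0 < γ) {β : ℝ} (hβ : 0 < β) (c x : ℝ) :
    2 * γ * deriv (deriv fun x => c * gaussLaplace γ (β - 1) x) x
      - x * deriv (fun x => c * gaussLaplace γ (β - 1) x) x
      - β * (c * gaussLaplace γ (β - 1) x) = 0 := by
  rw [deriv_const_mul_gaussLaplace hγ (by linarith), sub_add_cancel,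
    deriv_const_mul_gaussLaplace hγ (by linarith)]
  linear_combination (-c) * gaussLaplace_recurrence hγ hβ x

end GaussLaplace

/-- There exist a bounded, twice continuously differentiable function `U : [0,∞) → ℝ` and a
constant `M > 0` such that `U > 0`, `U'(0) = -1`, `-M ≤ U'(x) < 0` for all `x ≥ 0`, and
`(σ²/2)U''(x) − θxU'(x) − αU(x) = 0` for all `x ≥ 0`. -/
theorem statement7
    (σ θ α : ℝ) (hσ : 0 < σ) (hθ : 0 < θ) (hα : 0 < α) :
    ∃ U : ℝ → ℝ, ∃ M : ℝ,
      0 < M ∧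
      ContDiff ℝ 2 U ∧
      (∃ B : ℝ, ∀ x ≥ (0 : ℝ), |U x| ≤ B) ∧
      (∀ x ≥ (0 : ℝ), 0 < U x) ∧
      deriv U 0 = -1 ∧
      (∀ x ≥ (0 : ℝ), -M ≤ deriv U x ∧ deriv U x < 0) ∧
      (∀ x ≥ (0 : ℝ),
        σ ^ 2 / 2 * deriv (deriv U) x - θ * x * deriv U x - α * U x = 0) := by
  set γ := σ ^ 2 / (4 * θ) with hγdef
  set β := α / θ with hβdef
  have hγ : 0 < γ := by positivity
  have hβ : 0 < β := by positivity
  have hβ₁ : -1 < β - 1 := by linarith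
  have hβ₀ : -1 < β := by linarith
  set c := (gaussLaplace γ β 0)⁻¹
  have hc : 0 < c := inv_pos.2 (gaussLaplace_pos hγ hβ₀ 0)
  have hcβ : c * gaussLaplace γ β 0 = 1 := inv_mul_cancel₀ (gaussLaplace_pos hγ hβ₀ 0).ne'
  have hU' := deriv_const_mul_gaussLaplace hγ hβ₁ c
  rw [sub_add_cancel] at hU'
  refine ⟨fun x => c * gaussLaplace γ (β - 1) x, 1, one_pos,
    contDiff_const.mul (contDiff_gaussLaplace hγ hβ₁ 2),
    ⟨c * gaussLaplace γ (β - 1) 0, fun x hx => ?_⟩,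
    fun x _ => mul_pos hc (gaussLaplace_pos hγ hβ₁ x), by simp only [hU', neg_mul, hcβ],
    fun x hx => ?_, fun x _ => ?_⟩
  · rw [abs_of_pos (mul_pos hc (gaussLaplace_pos hγ hβ₁ x))]
    exact mul_le_mul_of_nonneg_left (antitone_gaussLaplace hγ hβ₁ hx) hc.le
  · simp only [hU', neg_mul, neg_le_neg_iff, neg_lt_zero]
    exact ⟨hcβ ▸ mul_le_mul_of_nonneg_left (antitone_gaussLaplace hγ hβ₀ hx) hc.le,
      mul_pos hc (gaussLaplace_pos hγ hβ₀ x)⟩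
  · have hσγ : σ ^ 2 / 2 = θ * (2 * γ) := by
      rw [hγdef]
      field_simp
      ring
    have hαβ : α = θ * β := by
      rw [hβdef]
      field_simp
    rw [hσγ, hαβ]
    linear_combination θ * gaussLaplace_ode hγ hβ c x
end

section
/- Suppose W : [0,∞) → ℝ solves the integral equation with parameter r (for some r ≥ 0) on all of [0,∞), and suppose W(x) < 0 and W'(x) > 0 for every x ≥ 0. Then W(x) → 0 as x → ∞. -/
/-!
Since `W' > 0` and `W < 0`, the function `W` increases to a limit `L ≤ 0`. If `L < 0`, then
`F(W) ≤ 0`, `θ x W(x) ≤ θ L x` and `α ∫₀ˣ W ≤ α L x` make the right-hand side of the integral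
equation at most `αK_r + (θ + α) L x`, which tends to `-∞`; this contradicts `W' > 0`.
-/

open Set Filter

open Topology

theorem MonotoneOn.exists_tendsto_atTop_of_le {α β : Type*} [LinearOrder α]
    [ConditionallyCompleteLinearOrder β] [TopologicalSpace β] [OrderTopology β]
    {f : α → β} {a : α} {b : β} (hf : MonotoneOn f (Ici a)) (hb : ∀ x ≥ a, f x ≤ b) :
    ∃ L, Tendsto f atTop (𝓝 L) ∧ ∀ x ≥ a, f x ≤ L := by
  set g : α → β := fun x => f (max x a)
  have hg : Monotone g := fun x y hxy =>
    hf (le_max_right x a) (le_max_right y a) (max_le_max hxy le_rfl)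
  have hbdd : BddAbove (range g) := ⟨b, by rintro _ ⟨x, rfl⟩; exact hb _ (le_max_right x a)⟩
  have hfg : ∀ x ≥ a, f x = g x := fun x hx => by simp only [g, max_eq_left hx]
  refine ⟨⨆ x, g x, (tendsto_atTop_ciSup hg hbdd).congr' ?_, fun x hx => ?_⟩
  · filter_upwards [eventually_ge_atTop a] with x hx using (hfg x hx).symm
  · exact (hfg x hx).trans_le (le_ciSup hbdd x)

theorem integral_equation_rhs_le {W : ℝ → ℝ} {F θ α k L x : ℝ} (hF : F ≤ 0) (hθ : 0 ≤ θ)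
    (hα : 0 ≤ α) (hx : 0 ≤ x) (hW : ContinuousOn W (Icc 0 x)) (hWL : ∀ s ∈ Icc 0 x, W s ≤ L) :
    F + θ * x * W x + α * (∫ s in (0 : ℝ)..x, W s) + k ≤ k + (θ + α) * L * x := by
  have hint : ∫ s in (0 : ℝ)..x, W s ≤ x * L := by
    simpa using intervalIntegral.integral_mono_on hx
      (hW.intervalIntegrable_of_Icc (μ := MeasureTheory.volume) hx) intervalIntegrable_const hWL
  have hθW : θ * x * W x ≤ θ * x * L :=
    mul_le_mul_of_nonneg_left (hWL x ⟨hx, le_rfl⟩) (mul_nonneg hθ hx)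
  nlinarith [mul_le_mul_of_nonneg_left hint hα]

theorem exists_add_mul_neg {a b : ℝ} (hb : b < 0) : ∃ x ≥ (0 : ℝ), a + b * x < 0 := by
  have hbot : Tendsto (fun x => a + b * x) atTop atBot :=
    tendsto_atBot_add_const_left _ a (tendsto_id.const_mul_atTop_of_neg hb)
  exact ((eventually_ge_atTop 0).and (hbot.eventually_lt_atBot 0)).exists

theorem statement15_general
    (C : ℝ → ℝ) (σ θ α p : ℝ)
    (hθ : 0 < θ) (hα : 0 < α)
    (hFneg : ∀ y ≤ (0 : ℝ), LF C y ≤ 0)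
    (r : ℝ)
    (W : ℝ → ℝ)
    (hIE : ∀ x ≥ (0 : ℝ),
      σ ^ 2 / 2 * deriv W x
        = LF C (W x) + θ * x * W x + α * (∫ s in (0 : ℝ)..x, W s)
          + α * (1 / α * (σ ^ 2 / 2 * r - LF C (-p))))
    (hneg : ∀ x ≥ (0 : ℝ), W x < 0)
    (hinc : ∀ x ≥ (0 : ℝ), 0 < deriv W x) :
    Tendsto W atTop (nhds 0) := by
  have hcont : ContinuousOn W (Ici 0) := fun x hx =>
    (differentiableAt_of_deriv_ne_zero (hinc x hx).ne').continuousAt.continuousWithinAt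
  have hmono : MonotoneOn W (Ici 0) :=
    (strictMonoOn_of_deriv_pos (convex_Ici 0) hcont fun x hx =>
      hinc x (interior_subset hx)).monotoneOn
  obtain ⟨L, hWL, hle⟩ := hmono.exists_tendsto_atTop_of_le fun x hx => (hneg x hx).le
  have hL_nonpos : L ≤ 0 :=
    le_of_tendsto hWL ((eventually_ge_atTop 0).mono fun x hx => (hneg x hx).le)
  obtain hL | rfl := hL_nonpos.lt_or_eq
  · exfalso
    set k := α * (1 / α * (σ ^ 2 / 2 * r - LF C (-p)))
    obtain ⟨x, hx, hxneg⟩ :=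
      exists_add_mul_neg (a := k) (mul_neg_of_pos_of_neg (add_pos hθ hα) hL)
    have hrhs := integral_equation_rhs_le (k := k) (hFneg _ (hneg x hx).le) hθ.le hα.le hx
      (hcont.mono Icc_subset_Ici_self) fun s hs => hle s hs.1
    have hlhs : 0 ≤ σ ^ 2 / 2 * deriv W x := mul_nonneg (by positivity) (hinc x hx).le
    linarith [hIE x hx]
  · exact hWL

/-- If `W` solves the integral equation `(σ²/2)W'(x) = F(W(x)) + θxW(x) + α∫₀ˣW + αK_r` on all
of `[0,∞)` with `W(0) = -p`, and `W(x) < 0`, `W'(x) > 0` for every `x ≥ 0`, then `W(x) → 0` as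
`x → ∞`. -/
theorem statement15
    (C : ℝ → ℝ) (σ θ α p : ℝ)
    (hσ : 0 < σ) (hθ : 0 < θ) (hα : 0 < α) (hp : 0 < p)
    (hC2 : ContDiff ℝ 2 C)
    (hCanti : AntitoneOn C (Set.Ici 0))
    (hCconv : ConvexOn ℝ (Set.Ici 0) C)
    (hC0 : 0 < C 0)
    (hClim : Tendsto C atTop (nhds 0))
    (hFneg : ∀ y ≤ (0 : ℝ), LF C y ≤ 0)
    (r : ℝ) (hr : 0 ≤ r)
    (W : ℝ → ℝ) (hW : ContDiff ℝ 1 W) (hW0 : W 0 = -p)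
    (hIE : ∀ x ≥ (0 : ℝ),
      σ ^ 2 / 2 * deriv W x
        = LF C (W x) + θ * x * W x + α * (∫ s in (0 : ℝ)..x, W s)
          + α * (1 / α * (σ ^ 2 / 2 * r - LF C (-p))))
    (hneg : ∀ x ≥ (0 : ℝ), W x < 0)
    (hinc : ∀ x ≥ (0 : ℝ), 0 < deriv W x) :
    Tendsto W atTop (nhds 0) :=
  statement15_general C σ θ α p hθ hα hFneg r W hIE hneg hinc
end
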